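/- Let d, N be natural numbers with 1 ≤ N ≤ d−1, let w₁ ∈ [0,1] and w₂ ≥ w₃ ≥ 0 be real numbers, and let v ∈ ℝ^d be the vector whose first N−1 entries equal w₂+w₃, whose N-th entry is w₂, whose (N+1)-st entry is w₃, and whose remaining entries are 0. Let A be a d×d complex Hermitian matrix and let B be a d×d complex Hermitian positive semidefinite matrix whose eigenvalue vector is majorized by v, i.e., trace B = (N−1)(w₂+w₃) + w₂ + w₃ and for every k with 1 ≤ k ≤ d the sum of the k largest eigenvalues of B is at most the sum of the k largest entries of v. Then the sum of the N largest eigenvalues of w₁·A + B is at most w₁·(sum of the N largest eigenvalues of A) + (N−1)(w₂+w₃) + w₂. -/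

import Mathlib

/-!
Ky Fan's inequality does the work. If `U` is unitary and `V` diagonalizes `A`, the diagonal
of `Uᴴ A U` is the eigenvalue vector of `A` averaged by the doubly stochastic matrix
`|(Vᴴ U)ᵢⱼ|²`, and such an average has no `k` entries summing to more than the `k` largest
eigenvalues (a fractional knapsack bound). Taking for `U` an eigenbasis of `w₁A + B` gives
`S_N(w₁A + B) ≤ w₁ S_N(A) + S_N(B)`. Majorization bounds `S_N(B)` by `S_N(v)`, and any `N`
entries of `v` include one past the first `N - 1`, which is at most `w₂`.
-/

open scoped ComplexOrder

/-- The sum of the `k` largest entries of `x : Fin d → ℝ`: the supremum over all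
`k`-element index sets of the sum of the corresponding entries. -/
noncomputable def sumKLargest {d : ℕ} (k : ℕ) (x : Fin d → ℝ) : ℝ :=
  sSup { y : ℝ | ∃ s : Finset (Fin d), s.card = k ∧ y = ∑ i ∈ s, x i }

open Finset Matrix

section sumKLargest

variable {d k : ℕ}

lemma le_sumKLargest (x : Fin d → ℝ) {s : Finset (Fin d)} (hs : #s = k) :
    ∑ i ∈ s, x i ≤ sumKLargest k x := by
  refine le_csSup (((univ.powersetCard k).image fun t => ∑ i ∈ t, x i).bddAbove.mono ?_)
    ⟨s, hs, rfl⟩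
  rintro _ ⟨t, ht, rfl⟩
  exact mem_coe.2 (mem_image.2 ⟨t, mem_powersetCard.2 ⟨subset_univ t, ht⟩, rfl⟩)

lemma sumKLargest_le (hk : k ≤ d) (x : Fin d → ℝ) {c : ℝ}
    (h : ∀ s : Finset (Fin d), #s = k → ∑ i ∈ s, x i ≤ c) : sumKLargest k x ≤ c := by
  obtain ⟨s, -, hs⟩ := exists_subset_card_eq (s := (univ : Finset (Fin d))) (by simpa using hk)
  exact csSup_le ⟨_, s, hs, rfl⟩ (by rintro _ ⟨t, ht, rfl⟩; exact h t ht)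

lemma exists_card_eq_forall_le_of_notMem (hk : k ≤ d) (x : Fin d → ℝ) :
    ∃ s : Finset (Fin d), #s = k ∧ ∀ i ∈ s, ∀ j ∉ s, x j ≤ x i := by
  obtain ⟨s, hs, hmax⟩ := (univ.powersetCard k).exists_max_image (fun s => ∑ i ∈ s, x i)
    (powersetCard_nonempty.2 (by simpa using hk))
  rw [mem_powersetCard] at hs
  refine ⟨s, hs.2, fun i hi j hj => ?_⟩
  have hj' : j ∉ s.erase i := fun h => hj (mem_of_mem_erase h)
  have hswap := hmax (insert j (s.erase i)) <| by
    rw [mem_powersetCard, card_insert_of_notMem hj', card_erase_of_mem hi,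
      Nat.sub_add_cancel (card_pos.2 ⟨i, hi⟩), hs.2]
    exact ⟨subset_univ _, rfl⟩
  rw [sum_insert hj', ← add_sum_erase s x hi] at hswap
  linarith

lemma sum_mul_le_sumKLargest (hk : 0 < k) (hkd : k ≤ d) (x t : Fin d → ℝ)
    (ht₀ : ∀ i, 0 ≤ t i) (ht₁ : ∀ i, t i ≤ 1) (ht : ∑ i, t i = k) :
    ∑ i, x i * t i ≤ sumKLargest k x := by
  obtain ⟨s, hs, hsx⟩ := exists_card_eq_forall_le_of_notMem hkd x
  obtain ⟨i₀, hi₀, hmin⟩ := s.exists_min_image x (card_pos.1 (hs ▸ hk))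
  set c := x i₀
  -- The threshold `c` separates `s` from its complement; the `c`-terms cancel as `∑ t = #s`.
  have hin : ∀ i ∈ s, x i * t i ≤ x i + c * (t i - 1) := fun i hi => by
    nlinarith [hmin i hi, ht₁ i]
  have hout : ∀ i ∈ sᶜ, x i * t i ≤ c * t i := fun i hi => by
    nlinarith [hsx i₀ hi₀ i (mem_compl.1 hi), ht₀ i]
  calc ∑ i, x i * t i = ∑ i ∈ s, x i * t i + ∑ i ∈ sᶜ, x i * t i :=
        (sum_add_sum_compl s _).symm
    _ ≤ ∑ i ∈ s, (x i + c * (t i - 1)) + ∑ i ∈ sᶜ, c * t i :=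
        add_le_add (sum_le_sum hin) (sum_le_sum hout)
    _ = ∑ i ∈ s, x i + c * (∑ i, t i - k) := by
        simp only [sum_add_distrib, ← mul_sum, sum_sub_distrib, sum_const, hs, nsmul_eq_mul,
          mul_one, ← sum_add_sum_compl s t]
        ring
    _ = ∑ i ∈ s, x i := by rw [ht, sub_self, mul_zero, add_zero]
    _ ≤ sumKLargest k x := le_sumKLargest x hs

lemma sum_vecMul_le_sumKLargest {P : Matrix (Fin d) (Fin d) ℝ}
    (hP : P ∈ doublyStochastic ℝ (Fin d)) (x : Fin d → ℝ) {s : Finset (Fin d)}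
    (hs : s.Nonempty) : ∑ j ∈ s, (x ᵥ* P) j ≤ sumKLargest #s x := by
  have hP₀ : ∀ i j, 0 ≤ P i j := fun _ _ => nonneg_of_mem_doublyStochastic hP
  convert sum_mul_le_sumKLargest hs.card_pos ((card_le_univ s).trans_eq (Fintype.card_fin d)) x
    (fun i => ∑ j ∈ s, P i j) (fun i => sum_nonneg fun j _ => hP₀ i j)
    (fun i => (sum_le_sum_of_subset_of_nonneg (subset_univ s) fun j _ _ => hP₀ i j).trans_eq
      (sum_row_of_mem_doublyStochastic hP i))
    (sum_comm.trans (by simp [sum_col_of_mem_doublyStochastic hP])) using 1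
  simp only [vecMul, dotProduct, mul_sum]
  exact sum_comm

lemma sumKLargest_succ_le {m : ℕ} (hm : m + 1 ≤ d) {x : Fin d → ℝ} {a b : ℝ}
    (ha : ∀ i, x i ≤ a) (hb : ∀ i : Fin d, m ≤ (i : ℕ) → x i ≤ b) :
    sumKLargest (m + 1) x ≤ m * a + b := by
  refine sumKLargest_le hm x fun s hs => ?_
  obtain ⟨i₀, hi₀, hmi₀⟩ : ∃ i ∈ s, m ≤ (i : ℕ) := by
    by_contra! h
    have := card_le_card_of_injOn (t := range m) (fun i : Fin d => (i : ℕ))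
      (fun i hi => mem_range.2 (h i hi)) Fin.val_injective.injOn
    simp [hs] at this
  have hrest : ∑ i ∈ s.erase i₀, x i ≤ m * a := by
    simpa [card_erase_of_mem hi₀, hs] using sum_le_card_nsmul (s.erase i₀) x a fun i _ => ha i
  rw [← add_sum_erase s x hi₀]
  linarith [hb i₀ hmi₀]

end sumKLargest

namespace Matrix

variable {𝕜 n : Type*} [RCLike 𝕜] [Fintype n] [DecidableEq n]

lemma norm_sq_mem_doublyStochastic {U : Matrix n n 𝕜} (hU : U ∈ unitaryGroup n 𝕜) :
    (of fun i j => ‖U i j‖ ^ 2) ∈ doublyStochastic ℝ n := by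
  have hrow (V : Matrix n n 𝕜) (hV : V * star V = 1) (i : n) : ∑ j, ‖V i j‖ ^ 2 = 1 := by
    have := congrFun (congrFun hV i) i
    simp only [mul_apply, star_apply, RCLike.star_def, RCLike.mul_conj, one_apply_eq] at this
    exact_mod_cast this
  refine mem_doublyStochastic_iff_sum.2
    ⟨fun _ _ => by rw [of_apply]; positivity, hrow U (mem_unitaryGroup_iff.1 hU), fun j => ?_⟩
  simpa [star_apply] using hrow (star U) (by simpa using mem_unitaryGroup_iff'.1 hU) j

lemma star_mul_diagonal_mul_apply_self (W : Matrix n n 𝕜) (f : n → ℝ) (j : n) :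
    (star W * diagonal (fun i => (f i : 𝕜)) * W) j j = ∑ i, (f i * ‖W i j‖ ^ 2 : ℝ) := by
  rw [mul_apply]
  simp only [mul_diagonal, star_apply, RCLike.star_def]
  push_cast
  refine sum_congr rfl fun i _ => ?_
  rw [← RCLike.conj_mul]
  ring

namespace IsHermitian

lemma star_mul_mul_apply_self {A : Matrix n n 𝕜} (hA : A.IsHermitian)
    (U : Matrix n n 𝕜) (j : n) :
    (star U * A * U) j j =
      ∑ i, (hA.eigenvalues i *
        ‖(star (hA.eigenvectorUnitary : Matrix n n 𝕜) * U) i j‖ ^ 2 : ℝ) := by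
  conv_lhs => rw [hA.spectral_theorem, Unitary.conjStarAlgAut_apply]
  rw [← star_mul_diagonal_mul_apply_self]
  simp only [star_mul, star_star, Matrix.mul_assoc]
  rfl

lemma eigenvalues_eq_re_star_mul_mul_apply_self {A : Matrix n n 𝕜} (hA : A.IsHermitian) (j : n) :
    hA.eigenvalues j = RCLike.re
      ((star (hA.eigenvectorUnitary : Matrix n n 𝕜) * A * hA.eigenvectorUnitary) j j) := by
  have := hA.conjStarAlgAut_star_eigenvectorUnitary
  rw [Unitary.conjStarAlgAut_apply, Unitary.coe_star, star_star] at this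
  simp [this]

end IsHermitian

lemma sum_re_star_mul_mul_apply_self_le_sumKLargest {d : ℕ} {A U : Matrix (Fin d) (Fin d) 𝕜}
    (hA : A.IsHermitian) (hU : U ∈ unitaryGroup (Fin d) 𝕜) {s : Finset (Fin d)}
    (hs : s.Nonempty) :
    ∑ j ∈ s, RCLike.re ((star U * A * U) j j) ≤ sumKLargest #s hA.eigenvalues := by
  set W := star (hA.eigenvectorUnitary : Matrix (Fin d) (Fin d) 𝕜) * U
  have hW : W ∈ unitaryGroup (Fin d) 𝕜 :=
    mul_mem (Unitary.star_mem hA.eigenvectorUnitary.2) hU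
  convert sum_vecMul_le_sumKLargest (norm_sq_mem_doublyStochastic hW) hA.eigenvalues hs using 2
    with j
  rw [hA.star_mul_mul_apply_self, RCLike.ofReal_re]
  simp [vecMul, dotProduct, W]

theorem sumKLargest_eigenvalues_smul_add_le {d k : ℕ} {A B : Matrix (Fin d) (Fin d) 𝕜}
    (hA : A.IsHermitian) (hB : B.IsHermitian) {c : ℝ} (hc : 0 ≤ c)
    (hAB : (c • A + B).IsHermitian) (hk : 0 < k) (hkd : k ≤ d) :
    sumKLargest k hAB.eigenvalues ≤
      c * sumKLargest k hA.eigenvalues + sumKLargest k hB.eigenvalues := by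
  refine sumKLargest_le hkd _ fun s hs => ?_
  have hne : s.Nonempty := card_pos.1 (hs ▸ hk)
  set U : Matrix (Fin d) (Fin d) 𝕜 := ↑hAB.eigenvectorUnitary
  have hdiag (j : Fin d) : hAB.eigenvalues j =
      c * RCLike.re ((star U * A * U) j j) + RCLike.re ((star U * B * U) j j) := by
    rw [hAB.eigenvalues_eq_re_star_mul_mul_apply_self]
    simp [U, Matrix.mul_add, Matrix.add_mul, RCLike.smul_re]
  calc ∑ j ∈ s, hAB.eigenvalues j
      = c * ∑ j ∈ s, RCLike.re ((star U * A * U) j j) +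
          ∑ j ∈ s, RCLike.re ((star U * B * U) j j) := by
        simp only [hdiag, sum_add_distrib, mul_sum]
    _ ≤ c * sumKLargest k hA.eigenvalues + sumKLargest k hB.eigenvalues := by
        rw [← hs]
        gcongr
        exacts [sum_re_star_mul_mul_apply_self_le_sumKLargest hA hAB.eigenvectorUnitary.2 hne,
          sum_re_star_mul_mul_apply_self_le_sumKLargest hB hAB.eigenvectorUnitary.2 hne]

end Matrix

theorem sum_N_largest_eigenvalues_r3_upper_bound_general
    (d N : ℕ) (hN : 1 ≤ N) (hNd : N ≤ d - 1)
    (w₁ w₂ w₃ : ℝ) (hw₁ : w₁ ∈ Set.Icc (0 : ℝ) 1) (hw₂₃ : w₂ ≥ w₃) (hw₃ : w₃ ≥ 0)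
    (v : Fin d → ℝ)
    (hv : ∀ i : Fin d, v i =
      if (i : ℕ) < N - 1 then w₂ + w₃
      else if (i : ℕ) = N - 1 then w₂
      else if (i : ℕ) = N then w₃
      else 0)
    (A B : Matrix (Fin d) (Fin d) ℂ) (hA : A.IsHermitian) (hB : B.PosSemidef)
    (hmaj : ∀ k : ℕ, 1 ≤ k → k ≤ d →
      sumKLargest k hB.isHermitian.eigenvalues ≤ sumKLargest k v)
    (hγ : (w₁ • A + B).IsHermitian) :
    sumKLargest N hγ.eigenvalues ≤
      w₁ * sumKLargest N hA.eigenvalues + ((N : ℝ) - 1) * (w₂ + w₃) + w₂ := by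
  have hNle : N ≤ d := by omega
  have hv_le : sumKLargest N v ≤ ((N : ℝ) - 1) * (w₂ + w₃) + w₂ := by
    obtain ⟨m, rfl⟩ : ∃ m, N = m + 1 := ⟨N - 1, by omega⟩
    have := sumKLargest_succ_le hNle (x := v) (a := w₂ + w₃) (b := w₂)
      (fun i => by rw [hv i]; split_ifs <;> linarith)
      (fun i hi => by rw [hv i]; split_ifs <;> first | omega | linarith)
    simpa using this
  calc sumKLargest N hγ.eigenvalues
      ≤ w₁ * sumKLargest N hA.eigenvalues + sumKLargest N hB.isHermitian.eigenvalues :=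
        sumKLargest_eigenvalues_smul_add_le hA hB.isHermitian hw₁.1 hγ hN hNle
    _ ≤ _ := by linarith [hmaj N hN hNle]

/-- upper bound on the sum of the `N` largest eigenvalues of `w₁·A + B`,
where `B` is positive semidefinite with eigenvalue vector majorized by
`v = (w₂+w₃, …, w₂+w₃, w₂, w₃, 0, …)` (with `N−1` leading entries `w₂+w₃`). -/
theorem sum_N_largest_eigenvalues_r3_upper_bound
    (d N : ℕ) (hN : 1 ≤ N) (hNd : N ≤ d - 1)
    (w₁ w₂ w₃ : ℝ) (hw₁ : w₁ ∈ Set.Icc (0 : ℝ) 1) (hw₂₃ : w₂ ≥ w₃) (hw₃ : w₃ ≥ 0)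
    (v : Fin d → ℝ)
    (hv : ∀ i : Fin d, v i =
      if (i : ℕ) < N - 1 then w₂ + w₃
      else if (i : ℕ) = N - 1 then w₂
      else if (i : ℕ) = N then w₃
      else 0)
    (A B : Matrix (Fin d) (Fin d) ℂ) (hA : A.IsHermitian) (hB : B.PosSemidef)
    (htrB : B.trace = ((((N : ℝ) - 1) * (w₂ + w₃) + w₂ + w₃ : ℝ) : ℂ))
    (hmaj : ∀ k : ℕ, 1 ≤ k → k ≤ d →
      sumKLargest k hB.isHermitian.eigenvalues ≤ sumKLargest k v)
    (hγ : (w₁ • A + B).IsHermitian) :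
    sumKLargest N hγ.eigenvalues ≤
      w₁ * sumKLargest N hA.eigenvalues + ((N : ℝ) - 1) * (w₂ + w₃) + w₂ :=
  sum_N_largest_eigenvalues_r3_upper_bound_general d N hN hNd w₁ w₂ w₃ hw₁ hw₂₃ hw₃ v hv A B hA hB
    hmaj hγ
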